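/- Let N = p₁^{α₁}···p_r^{α_r} be the prime factorization of N ≥ 2, let k be an integer, let l_i be the size of the k-monomial minimal solution modulo p_i^{α_i}, and let l be the size of the k̄-monomial minimal solution modulo N. Then l = lcm(l₁,...,l_r) or l = 2·lcm(l₁,...,l_r). -/

import Mathlib

def matE {N : ℕ} (a : ZMod N) : Matrix (Fin 2) (Fin 2) (ZMod N) := !![a, -1; 1, 0]

/-- `M_m(k,…,k) = ±Id` over `ℤ/Nℤ` (constant tuple, so a matrix power). -/
def isMonSol {N : ℕ} (k : ZMod N) (m : ℕ) : Prop :=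
  matE k ^ m = 1 ∨ matE k ^ m = -1

/-- `r` is the size of the `k`-monomial minimal solution modulo `N`. -/
def minMonSize {N : ℕ} (k : ZMod N) (r : ℕ) : Prop :=
  0 < r ∧ isMonSol k r ∧ ∀ m, 0 < m → isMonSol k m → r ≤ m

/-!
For `A = matE k`, the set of `m` with `A ^ m = ±1` is closed under addition and under cancelling
a summand, so for the minimal solution size `l` it consists exactly of the multiples of `l`.
Reducing modulo `p_i ^ α_i` shows `l_i ∣ l` for every `i`, hence `L := lcm l_i ∣ l`. Conversely
`A ^ L ≡ ±1` modulo every `p_i ^ α_i`, with signs that may differ, so `A ^ (2L) ≡ 1` modulo each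
of them and, by the Chinese remainder theorem, modulo `N`; thus `l ∣ 2L`.
-/

section PowEqOneOrNegOne

variable {M : Type*} [Monoid M] [HasDistribNeg M] {A : M} {m n : ℕ}

lemma pow_mul_eq_one_or_neg_one (h : A ^ m = 1 ∨ A ^ m = -1) (q : ℕ) :
    A ^ (m * q) = 1 ∨ A ^ (m * q) = -1 := by
  rw [pow_mul]
  rcases h with h | h <;> rw [h]
  · simp
  · exact neg_one_pow_eq_or M q

lemma pow_eq_one_or_neg_one_of_pow_add (hm : A ^ m = 1 ∨ A ^ m = -1)
    (hmn : A ^ (m + n) = 1 ∨ A ^ (m + n) = -1) : A ^ n = 1 ∨ A ^ n = -1 := by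
  rw [pow_add] at hmn
  rcases hm with h | h <;> rw [h] at hmn
  · simpa using hmn
  · rw [neg_one_mul, neg_inj, neg_eq_iff_eq_neg] at hmn
    exact hmn.symm

lemma pow_two_mul_eq_one (h : A ^ m = 1 ∨ A ^ m = -1) : A ^ (2 * m) = 1 := by
  rw [mul_comm, pow_mul]
  rcases h with h | h <;> simp [h]

end PowEqOneOrNegOne

lemma minMonSize.isMonSol_iff_dvd {N : ℕ} {k : ZMod N} {l m : ℕ} (hl : minMonSize k l) :
    isMonSol k m ↔ l ∣ m := by
  obtain ⟨hl0, hsol, hmin⟩ := hl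
  refine ⟨fun hm => ?_, fun ⟨q, hq⟩ => hq ▸ pow_mul_eq_one_or_neg_one hsol q⟩
  have hrem : isMonSol k (m % l) :=
    pow_eq_one_or_neg_one_of_pow_add (pow_mul_eq_one_or_neg_one hsol (m / l))
      (by rwa [Nat.div_add_mod])
  by_contra hdvd
  have hpos : 0 < m % l := Nat.pos_of_ne_zero (mt Nat.dvd_of_mod_eq_zero hdvd)
  exact absurd (Nat.mod_lt m hl0) (not_lt.2 (hmin _ hpos hrem))

lemma RingHom.mapMatrix_matE {N M : ℕ} (f : ZMod N →+* ZMod M) (a : ZMod N) :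
    f.mapMatrix (matE a) = matE (f a) := by
  ext i j
  fin_cases i <;> fin_cases j <;> simp [matE]

lemma mapMatrix_castHom_matE_intCast_pow {N M : ℕ} (h : M ∣ N) (k : ℤ) (m : ℕ) :
    (ZMod.castHom h (ZMod M)).mapMatrix (matE (k : ZMod N) ^ m) = matE (k : ZMod M) ^ m := by
  rw [map_pow, RingHom.mapMatrix_matE, map_intCast]

lemma isMonSol.castHom {N M : ℕ} (h : M ∣ N) {k : ℤ} {m : ℕ}
    (hs : isMonSol (k : ZMod N) m) : isMonSol (k : ZMod M) m := by
  unfold isMonSol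
  rw [← mapMatrix_castHom_matE_intCast_pow h]
  rcases hs with hs | hs
  · exact Or.inl (by rw [hs, map_one])
  · exact Or.inr (by rw [hs, map_neg, map_one])

lemma Matrix.eq_of_forall_map_castHom_eq {ι m n : Type*} [Fintype ι] {a : ι → ℕ}
    (ha : Pairwise (Function.onFun Nat.Coprime a)) {A B : Matrix m n (ZMod (∏ i, a i))}
    (h : ∀ i, A.map (ZMod.castHom (Finset.dvd_prod_of_mem a (Finset.mem_univ i)) (ZMod (a i))) =
      B.map (ZMod.castHom (Finset.dvd_prod_of_mem a (Finset.mem_univ i)) (ZMod (a i)))) :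
    A = B := by
  ext x y
  apply (ZMod.prodEquivPi a ha).injective
  funext i
  simpa using congrFun (congrFun (h i) x) y

lemma Nat.eq_or_eq_two_mul_of_dvd_of_dvd_two_mul {L l : ℕ} (hl : 0 < l) (hLl : L ∣ l)
    (hl2L : l ∣ 2 * L) : l = L ∨ l = 2 * L := by
  obtain ⟨d, rfl⟩ := hLl
  have hL : 0 < L := Nat.pos_of_mul_pos_right hl
  have hd : d ∣ 2 := Nat.dvd_of_mul_dvd_mul_left hL (by rwa [mul_comm L 2])
  rcases (Nat.dvd_prime Nat.prime_two).1 hd with rfl | rfl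
  · exact Or.inl (mul_one L)
  · exact Or.inr (mul_comm L 2)

theorem stmt8_general (N : ℕ) (r : ℕ) (p α : Fin r → ℕ)
    (hp : ∀ i, (p i).Prime) (hdist : ∀ i j, i ≠ j → p i ≠ p j)
    (hfac : N = ∏ i, p i ^ α i)
    (k : ℤ) (li : Fin r → ℕ)
    (hli : ∀ i, minMonSize (k : ZMod (p i ^ α i)) (li i))
    (l : ℕ) (hl : minMonSize (k : ZMod N) l) :
    l = Finset.univ.lcm li ∨ l = 2 * Finset.univ.lcm li := by
  subst hfac
  have hcop : Pairwise (Function.onFun Nat.Coprime fun i => p i ^ α i) := fun i j hij =>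
    .pow _ _ ((Nat.coprime_primes (hp i) (hp j)).2 (hdist i j hij))
  have hdvd i : p i ^ α i ∣ ∏ i, p i ^ α i := Finset.dvd_prod_of_mem _ (Finset.mem_univ i)
  have hLl : Finset.univ.lcm li ∣ l := Finset.lcm_dvd fun i _ =>
    (hli i).isMonSol_iff_dvd.1 (hl.2.1.castHom (hdvd i))
  have hl2L : l ∣ 2 * Finset.univ.lcm li := by
    refine hl.isMonSol_iff_dvd.1 (Or.inl (Matrix.eq_of_forall_map_castHom_eq hcop fun i => ?_))
    have hsol := (hli i).isMonSol_iff_dvd.2 (Finset.dvd_lcm (Finset.mem_univ i))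
    rw [← RingHom.mapMatrix_apply, mapMatrix_castHom_matE_intCast_pow, pow_two_mul_eq_one hsol,
      Matrix.map_one _ (map_zero _) (map_one _)]
  exact Nat.eq_or_eq_two_mul_of_dvd_of_dvd_two_mul hl.1 hLl hl2L

theorem stmt8 (N : ℕ) (hN : 2 ≤ N) (r : ℕ) (p α : Fin r → ℕ)
    (hp : ∀ i, (p i).Prime) (hdist : ∀ i j, i ≠ j → p i ≠ p j)
    (hα : ∀ i, 1 ≤ α i) (hfac : N = ∏ i, p i ^ α i)
    (k : ℤ) (li : Fin r → ℕ)
    (hli : ∀ i, minMonSize (k : ZMod (p i ^ α i)) (li i))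
    (l : ℕ) (hl : minMonSize (k : ZMod N) l) :
    l = Finset.univ.lcm li ∨ l = 2 * Finset.univ.lcm li :=
  stmt8_general N r p α hp hdist hfac k li hli l hl
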